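/- arXiv:1701.00668 — 4 statements merged into one kernel-verified Lean document; each statement's English description precedes it below -/
import Mathlib

section
/- The function f(x) = (6(1+x)^2/(3+2x)) · ((1+x)ln(1+x) - x)/x^2 - 1 is strictly monotonically increasing on (0,∞). -/
/-!
Writing `L = log (1 + x)`, a direct computation gives `f' x = 6 (1 + x) g x / ((3 + 2x)² x³)`
with `g x = 2x³ + 6x² + 6x - 3 (x + 1) (x + 2) L`. Now `g 0 = 0` and
`g' x = 3 (2x + 3) (x - L) > 0` because `log (1 + x) < x`, so `g > 0` on `(0, ∞)`.
-/

open Real Set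

lemma strictMonoOn_of_hasDerivAt_pos {D : Set ℝ} (hD : Convex ℝ D) {f f' : ℝ → ℝ}
    (hf : ∀ x ∈ D, HasDerivAt f (f' x) x) (hf' : ∀ x ∈ interior D, 0 < f' x) :
    StrictMonoOn f D :=
  strictMonoOn_of_hasDerivWithinAt_pos hD (fun x hx ↦ (hf x hx).continuousAt.continuousWithinAt)
    (fun x hx ↦ (hf x (interior_subset hx)).hasDerivWithinAt) hf'

lemma log_one_add_lt_self {x : ℝ} (hx : 0 < x) : log (1 + x) < x := by
  linarith [log_lt_sub_one_of_pos (x := 1 + x) (by linarith) (by linarith)]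

lemma hasDerivAt_log_one_add {x : ℝ} (hx : 0 < 1 + x) :
    HasDerivAt (fun y ↦ log (1 + y)) (1 / (1 + x)) x := by
  simpa using ((hasDerivAt_id x).const_add 1).log hx.ne'

noncomputable def logGap (x : ℝ) : ℝ :=
  2 * x ^ 3 + 6 * x ^ 2 + 6 * x - 3 * ((x + 1) * (x + 2)) * log (1 + x)

lemma hasDerivAt_logGap {x : ℝ} (hx : 0 < 1 + x) :
    HasDerivAt logGap (3 * (2 * x + 3) * (x - log (1 + x))) x := by
  have h := ((((hasDerivAt_pow 3 x).const_mul 2).add ((hasDerivAt_pow 2 x).const_mul 6)).add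
    ((hasDerivAt_id x).const_mul 6)).sub
    (((((hasDerivAt_id x).add_const 1).mul ((hasDerivAt_id x).add_const 2)).const_mul 3).mul
      (hasDerivAt_log_one_add hx))
  refine h.congr_deriv ?_
  simp only [id, Pi.mul_apply, Nat.cast_ofNat, Nat.add_one_sub_one, pow_one]
  field_simp
  ring

lemma logGap_pos {x : ℝ} (hx : 0 < x) : 0 < logGap x := by
  have hmono : StrictMonoOn logGap (Ici 0) := by
    refine strictMonoOn_of_hasDerivAt_pos (convex_Ici 0)
      (fun y hy ↦ hasDerivAt_logGap (by linarith [mem_Ici.mp hy])) (fun y hy ↦ ?_)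
    rw [interior_Ici, mem_Ioi] at hy
    have hlog := log_one_add_lt_self hy
    exact mul_pos (by positivity) (by linarith)
  simpa [logGap] using hmono self_mem_Ici hx.le hx

noncomputable def logRatio (x : ℝ) : ℝ :=
  6 * (1 + x) ^ 2 / (3 + 2 * x) * (((1 + x) * log (1 + x) - x) / x ^ 2) - 1

lemma hasDerivAt_logRatio {x : ℝ} (hx : 0 < x) :
    HasDerivAt logRatio (6 * (1 + x) * logGap x / ((3 + 2 * x) ^ 2 * x ^ 3)) x := by
  have h1x : 0 < 1 + x := by linarith
  have hlog : HasDerivAt (fun y ↦ (1 + y) * log (1 + y) - y) (log (1 + x)) x := by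
    refine ((((hasDerivAt_id x).const_add 1).mul (hasDerivAt_log_one_add h1x)).sub
      (hasDerivAt_id x)).congr_deriv ?_
    simp only [id]
    field_simp
    ring
  have h := ((((((hasDerivAt_id x).const_add 1).fun_pow 2).const_mul 6).fun_div
    (((hasDerivAt_id x).const_mul 2).const_add 3) (by positivity)).mul
    (hlog.fun_div (hasDerivAt_pow 2 x) (by positivity))).sub_const 1
  refine h.congr_deriv ?_
  rw [logGap]
  simp only [id]
  field_simp
  ring

lemma strictMonoOn_logRatio : StrictMonoOn logRatio (Ioi 0) := by
  refine strictMonoOn_of_hasDerivAt_pos (convex_Ioi 0) (fun _ ↦ hasDerivAt_logRatio)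
    (fun x hx ↦ ?_)
  rw [interior_Ioi, mem_Ioi] at hx
  have hgap := logGap_pos hx
  positivity

theorem stmt_1 (f : ℝ → ℝ)
    (hf : ∀ x : ℝ, 0 < x →
      f x = 6 * (1 + x)^2 / (3 + 2*x) * (((1 + x) * Real.log (1 + x) - x) / x^2) - 1) :
    StrictMonoOn f (Set.Ioi 0) :=
  strictMonoOn_logRatio.congr fun x hx ↦ (hf x hx).symm
end

section
/- For every x > 0, f(x) < x, where f(x) = (6(1+x)^2/(3+2x)) · ((1+x)ln(1+x) - x)/x^2 - 1. -/
/-!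
Put `t = 1 + x > 1`. After clearing the positive denominators `3 + 2x` and `x²`, the claim is
exactly `log t < t / 3 + 1 / 2 - 1 / t + 1 / (6 t²)`. The gap between the two sides vanishes at
`t = 1` and has derivative `(t - 1)³ / (3 t³) > 0` for `t > 1`, so it is positive there.
-/

open Real Set

noncomputable def logUpperGap (t : ℝ) : ℝ := t / 3 + 1 / 2 - t⁻¹ + (6 * t ^ 2)⁻¹ - log t

lemma logUpperGap_one : logUpperGap 1 = 0 := by
  norm_num [logUpperGap]

lemma hasDerivAt_logUpperGap {t : ℝ} (ht : t ≠ 0) :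
    HasDerivAt logUpperGap ((t - 1) ^ 3 / (3 * t ^ 3)) t := by
  have h := (((((hasDerivAt_id t).div_const 3).add_const (1 / 2)).sub (hasDerivAt_inv ht)).add
    (((hasDerivAt_pow 2 t).const_mul 6).inv (by positivity))).sub (hasDerivAt_log ht)
  refine h.congr_deriv ?_
  norm_num
  field_simp
  ring

lemma strictMonoOn_logUpperGap : StrictMonoOn logUpperGap (Ici 1) := by
  refine strictMonoOn_of_hasDerivWithinAt_pos (f' := fun s => (s - 1) ^ 3 / (3 * s ^ 3))
    (convex_Ici 1)
    (fun s hs =>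
      (hasDerivAt_logUpperGap (zero_lt_one.trans_le hs).ne').continuousAt.continuousWithinAt)
    (fun s hs => ?_) fun s hs => ?_
  all_goals rw [interior_Ici, mem_Ioi] at hs
  · exact (hasDerivAt_logUpperGap (zero_lt_one.trans hs).ne').hasDerivWithinAt
  · have : 0 < s - 1 := sub_pos.2 hs
    positivity

lemma log_lt_of_one_lt {t : ℝ} (ht : 1 < t) :
    log t < t / 3 + 1 / 2 - t⁻¹ + (6 * t ^ 2)⁻¹ := by
  have hgap := strictMonoOn_logUpperGap self_mem_Ici ht.le ht
  rw [logUpperGap_one, logUpperGap] at hgap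
  linarith

theorem stmt_2 :
    ∀ x : ℝ, 0 < x →
      6 * (1 + x)^2 / (3 + 2*x) * (((1 + x) * Real.log (1 + x) - x) / x^2) - 1 < x := by
  intro x hx
  have hbound : 6 * (1 + x) ^ 3 * log (1 + x) <
      2 * (1 + x) ^ 4 + 3 * (1 + x) ^ 3 - 6 * (1 + x) ^ 2 + (1 + x) := by
    have hlog := log_lt_of_one_lt (show 1 < 1 + x by linarith)
    have hpos : 0 < 6 * (1 + x) ^ 3 := by positivity
    calc _ < 6 * (1 + x) ^ 3 * ((1 + x) / 3 + 1 / 2 - (1 + x)⁻¹ + (6 * (1 + x) ^ 2)⁻¹) := by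
          gcongr
      _ = _ := by field_simp; ring
  rw [sub_lt_iff_lt_add, div_mul_div_comm, div_lt_iff₀ (by positivity)]
  linarith
end

section
/- If c > 1 and A_CB > 0 satisfies c^2 - 1 = f(A_CB) with f(x) = (6(1+x)^2/(3+2x)) · ((1+x)ln(1+x) - x)/x^2 - 1, then the Serre amplitude A_S := c^2 - 1 satisfies A_S < A_CB. -/
/-!
With `t = 1 + A_CB`, clearing the positive denominators turns `f(A_CB) < A_CB` into the
logarithmic bound `log t < (2t³ + 3t² - 6t + 1) / (6t²)` for `t > 1`. Both sides vanish at
`t = 1`, and the derivative of their difference is `(t - 1)³ / (3t³) > 0`.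
-/

open Real Set

lemma hasDerivAt_cubic_div_sq_sub_log {t : ℝ} (ht : t ≠ 0) :
    HasDerivAt (fun s => (2 * s ^ 3 + 3 * s ^ 2 - 6 * s + 1) / (6 * s ^ 2) - log s)
      ((t - 1) ^ 3 / (3 * t ^ 3)) t := by
  have hnum : HasDerivAt (fun s : ℝ => 2 * s ^ 3 + 3 * s ^ 2 - 6 * s + 1)
      (6 * t ^ 2 + 6 * t - 6) t :=
    ((((hasDerivAt_pow 3 t).const_mul 2).fun_add ((hasDerivAt_pow 2 t).const_mul 3)).fun_sub
      ((hasDerivAt_id' t).const_mul 6)).add_const 1 |>.congr_deriv (by norm_num; ring)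
  have hden : HasDerivAt (fun s : ℝ => 6 * s ^ 2) (12 * t) t :=
    ((hasDerivAt_pow 2 t).const_mul 6).congr_deriv (by norm_num; ring)
  refine ((hnum.fun_div hden (by positivity)).fun_sub (hasDerivAt_log ht)).congr_deriv ?_
  field_simp
  ring

lemma log_lt_cubic_div_sq {t : ℝ} (ht : 1 < t) :
    log t < (2 * t ^ 3 + 3 * t ^ 2 - 6 * t + 1) / (6 * t ^ 2) := by
  let g : ℝ → ℝ := fun s => (2 * s ^ 3 + 3 * s ^ 2 - 6 * s + 1) / (6 * s ^ 2) - log s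
  have hg : ∀ s ∈ Ici (1 : ℝ), HasDerivAt g ((s - 1) ^ 3 / (3 * s ^ 3)) s := fun s hs =>
    hasDerivAt_cubic_div_sq_sub_log (by linarith [mem_Ici.mp hs])
  have hmono : StrictMonoOn g (Ici 1) :=
    strictMonoOn_of_hasDerivWithinAt_pos (convex_Ici 1)
      (fun s hs => (hg s hs).continuousAt.continuousWithinAt)
      (fun s hs => (hg s (interior_subset hs)).hasDerivWithinAt)
      (fun s hs => by
        rw [interior_Ici, mem_Ioi] at hs
        have : 0 < s - 1 := sub_pos.mpr hs
        positivity)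
  have hg_pos : g 1 < g t := hmono self_mem_Ici ht.le ht
  norm_num [g] at hg_pos
  linarith

theorem stmt_3_general (c A_CB : ℝ) (hA : 0 < A_CB)
    (h : c^2 - 1 =
      6 * (1 + A_CB)^2 / (3 + 2*A_CB) *
        (((1 + A_CB) * Real.log (1 + A_CB) - A_CB) / A_CB^2) - 1) :
    c^2 - 1 < A_CB := by
  have hlog := log_lt_cubic_div_sq (by linarith : 1 < 1 + A_CB)
  rw [lt_div_iff₀ (by positivity)] at hlog
  rw [h, div_mul_div_comm, sub_lt_iff_lt_add, div_lt_iff₀ (by positivity)]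
  nlinarith [mul_lt_mul_of_pos_left hlog (by linarith : 0 < 1 + A_CB)]

theorem stmt_3 (c A_CB : ℝ) (hc : 1 < c) (hA : 0 < A_CB)
    (h : c^2 - 1 =
      6 * (1 + A_CB)^2 / (3 + 2*A_CB) *
        (((1 + A_CB) * Real.log (1 + A_CB) - A_CB) / A_CB^2) - 1) :
    c^2 - 1 < A_CB :=
  stmt_3_general c A_CB hA h
end

section
/- Suppose η, u are smooth functions on ℝ × [0,T], 1-periodic in x, with η > 0, solving the Serre system η_t + (ηu)_x = 0 and u_t + η_x + u u_x - (1/(3η))[η^3(u_{xt} + u u_{xx} - u_x^2)]_x = 0. Then the energy E(t) = (1/2)∫_0^1 [η u^2 + (1/3) η^3 u_x^2 + (η-1)^2] dx is independent of t. -/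
open Set Filter MeasureTheory Metric

noncomputable def Spx (f : ℝ → ℝ → ℝ) : ℝ → ℝ → ℝ := fun x t => deriv (fun y => f y t) x
noncomputable def Spt (f : ℝ → ℝ → ℝ) : ℝ → ℝ → ℝ := fun x t => deriv (fun s => f x s) t

lemma contDiff_slicex {f : ℝ → ℝ → ℝ} (hf : ContDiff ℝ (⊤ : ℕ∞) (fun p : ℝ × ℝ => f p.1 p.2)) (t : ℝ) :
    ContDiff ℝ (⊤ : ℕ∞) (fun y : ℝ => f y t) :=
  hf.comp (contDiff_id.prodMk contDiff_const)

lemma contDiff_slicet {f : ℝ → ℝ → ℝ} (hf : ContDiff ℝ (⊤ : ℕ∞) (fun p : ℝ × ℝ => f p.1 p.2)) (x : ℝ) :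
    ContDiff ℝ (⊤ : ℕ∞) (fun s : ℝ => f x s) :=
  hf.comp (contDiff_const.prodMk contDiff_id)

lemma hasDerivAt_Spx (f : ℝ → ℝ → ℝ) (hf : ContDiff ℝ (⊤ : ℕ∞) (fun p : ℝ × ℝ => f p.1 p.2)) (x t : ℝ) :
    HasDerivAt (fun y => f y t) (Spx f x t) x :=
  ((contDiff_slicex hf t).differentiable (by simp) x).hasDerivAt

lemma hasDerivAt_Spt (f : ℝ → ℝ → ℝ) (hf : ContDiff ℝ (⊤ : ℕ∞) (fun p : ℝ × ℝ => f p.1 p.2)) (x t : ℝ) :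
    HasDerivAt (fun s => f x s) (Spt f x t) t :=
  ((contDiff_slicet hf x).differentiable (by simp) t).hasDerivAt

lemma contDiff_Spx (f : ℝ → ℝ → ℝ) (hf : ContDiff ℝ (⊤ : ℕ∞) (fun p : ℝ × ℝ => f p.1 p.2)) :
    ContDiff ℝ (⊤ : ℕ∞) (fun p : ℝ × ℝ => Spx f p.1 p.2) := by
  have h1 : ContDiff ℝ (⊤ : ℕ∞) (Function.uncurry fun (p : ℝ × ℝ) (y : ℝ) => f y p.2) :=
    hf.comp (contDiff_snd.prodMk (contDiff_snd.comp contDiff_fst))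
  have h2 := h1.fderiv_apply (n := (⊤ : ℕ∞)) (g := fun p : ℝ × ℝ => p.1) (k := fun _ => (1:ℝ))
    contDiff_fst contDiff_const (by simp)
  have h3 : (fun p : ℝ × ℝ => Spx f p.1 p.2)
      = fun p : ℝ × ℝ => fderiv ℝ (fun y => f y p.2) p.1 1 := by
    funext p
    simp only [Spx]
    exact fderiv_apply_one_eq_deriv.symm
  rw [h3]
  exact h2

lemma contDiff_Spt (f : ℝ → ℝ → ℝ) (hf : ContDiff ℝ (⊤ : ℕ∞) (fun p : ℝ × ℝ => f p.1 p.2)) :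
    ContDiff ℝ (⊤ : ℕ∞) (fun p : ℝ × ℝ => Spt f p.1 p.2) := by
  have h1 : ContDiff ℝ (⊤ : ℕ∞) (Function.uncurry fun (p : ℝ × ℝ) (s : ℝ) => f p.1 s) :=
    hf.comp ((contDiff_fst.comp contDiff_fst).prodMk contDiff_snd)
  have h2 := h1.fderiv_apply (n := (⊤ : ℕ∞)) (g := fun p : ℝ × ℝ => p.2) (k := fun _ => (1:ℝ))
    contDiff_snd contDiff_const (by simp)
  have h3 : (fun p : ℝ × ℝ => Spt f p.1 p.2)
      = fun p : ℝ × ℝ => fderiv ℝ (fun s => f p.1 s) p.2 1 := by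
    funext p
    simp only [Spt]
    exact fderiv_apply_one_eq_deriv.symm
  rw [h3]
  exact h2

lemma per_Spx (f : ℝ → ℝ → ℝ) (hper : ∀ t x, f (x + 1) t = f x t) :
    ∀ t x, Spx f (x + 1) t = Spx f x t := by
  intro t x
  have h : (fun y => f (y + 1) t) = fun y => f y t := funext fun y => hper t y
  calc Spx f (x + 1) t = deriv (fun y => f (y + 1) t) x := (deriv_comp_add_const (fun y => f y t) 1 x).symm
    _ = Spx f x t := by rw [h]; rfl

lemma per_Spt (f : ℝ → ℝ → ℝ) (hper : ∀ t x, f (x + 1) t = f x t) :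
    ∀ t x, Spt f (x + 1) t = Spt f x t := by
  intro t x
  simp only [Spt]
  congr 1
  funext s
  exact hper s x
noncomputable def Seden (η u : ℝ → ℝ → ℝ) : ℝ → ℝ → ℝ := fun x t =>
  η x t * (u x t)^2 + (1/3) * (η x t)^3 * (Spx u x t)^2 + (η x t - 1)^2

noncomputable def Sflux (η u : ℝ → ℝ → ℝ) : ℝ → ℝ → ℝ := fun x t =>
  (2/3) * (η x t)^3 * u x t * (Spt (Spx u) x t + u x t * Spx (Spx u) x t)
    - η x t * u x t * ((u x t)^2 + (η x t)^2 * (Spx u x t)^2 + 2 * η x t - 2)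

lemma Seden_smooth (η u : ℝ → ℝ → ℝ)
    (hηs : ContDiff ℝ (⊤ : ℕ∞) (fun p : ℝ × ℝ => η p.1 p.2))
    (hus : ContDiff ℝ (⊤ : ℕ∞) (fun p : ℝ × ℝ => u p.1 p.2)) :
    ContDiff ℝ (⊤ : ℕ∞) (fun p : ℝ × ℝ => Seden η u p.1 p.2) := by
  have hpx := contDiff_Spx u hus
  exact ((hηs.mul (hus.pow 2)).add ((contDiff_const.mul (hηs.pow 3)).mul (hpx.pow 2))).add
    ((hηs.sub contDiff_const).pow 2)

lemma Serre_key (T c₀ : ℝ) (hc₀ : 0 < c₀) (η u : ℝ → ℝ → ℝ)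
    (hηs : ContDiff ℝ (⊤ : ℕ∞) (fun p : ℝ × ℝ => η p.1 p.2))
    (hus : ContDiff ℝ (⊤ : ℕ∞) (fun p : ℝ × ℝ => u p.1 p.2))
    (hpos : ∀ x t, t ∈ Set.Icc 0 T → c₀ ≤ η x t)
    (hpde1 : ∀ x t, t ∈ Set.Icc 0 T →
      deriv (fun s => η x s) t + deriv (fun y => η y t * u y t) x = 0)
    (hpde2 : ∀ x t, t ∈ Set.Icc 0 T →
      deriv (fun s => u x s) t + deriv (fun y => η y t) x
        + u x t * deriv (fun y => u y t) x
        - (1 / (3 * η x t)) *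
          deriv (fun y => (η y t)^3 *
            (deriv (fun s => deriv (fun z => u z s) y) t
              + u y t * deriv (fun z => deriv (fun w => u w t) z) y
              - (deriv (fun z => u z t) y)^2)) x = 0) :
    ∀ t ∈ Set.Icc (0:ℝ) T, ∀ x : ℝ,
      HasDerivAt (fun y => Sflux η u y t) (Spt (Seden η u) x t) x := by
  intro t ht x
  have Hη := hasDerivAt_Spx η hηs x t
  have Hu := hasDerivAt_Spx u hus x t
  have Hux := hasDerivAt_Spx (Spx u) (contDiff_Spx u hus) x t
  have Huxx := hasDerivAt_Spx (Spx (Spx u)) (contDiff_Spx _ (contDiff_Spx u hus)) x t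
  have HW := hasDerivAt_Spx (Spt (Spx u)) (contDiff_Spt _ (contDiff_Spx u hus)) x t
  have Tη := hasDerivAt_Spt η hηs x t
  have Tu := hasDerivAt_Spt u hus x t
  have Tux := hasDerivAt_Spt (Spx u) (contDiff_Spx u hus) x t
  have hne : η x t ≠ 0 := (lt_of_lt_of_le hc₀ (hpos x t ht)).ne'
  have h1 : Spt η x t + (Spx η x t * u x t + η x t * Spx u x t) = 0 := by
    have h := hpde1 x t ht
    rwa [show deriv (fun y => η y t * u y t) x = _ from (Hη.mul Hu).deriv] at h
  have e1 : Spt η x t = -(Spx η x t * u x t + η x t * Spx u x t) := by linarith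
  have hD := (Hη.pow 3).mul ((HW.add (Hu.mul Huxx)).sub (Hux.pow 2))
  have h2 : Spt u x t + Spx η x t + u x t * Spx u x t
      - (1 / (3 * η x t)) *
        deriv (fun y => (η y t)^3 *
          (Spt (Spx u) y t + u y t * Spx (Spx u) y t - (Spx u y t)^2)) x = 0 :=
    hpde2 x t ht
  have e2 : Spt u x t = (1 / (3 * η x t)) *
        deriv (fun y => (η y t)^3 *
          (Spt (Spx u) y t + u y t * Spx (Spx u) y t - (Spx u y t)^2)) x
      - Spx η x t - u x t * Spx u x t := by linarith
  rw [show deriv (fun y => (η y t)^3 *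
          (Spt (Spx u) y t + u y t * Spx (Spx u) y t - (Spx u y t)^2)) x = _ from hD.deriv] at e2
  have ht' : HasDerivAt (fun s => Seden η u x s) _ t :=
    ((Tη.mul (Tu.pow 2)).add (((Tη.pow 3).const_mul (1/3 : ℝ)).mul (Tux.pow 2))).add
      ((Tη.sub_const 1).pow 2)
  have hf' : HasDerivAt (fun y => Sflux η u y t) _ x :=
    ((((Hη.pow 3).const_mul (2/3 : ℝ)).mul Hu).mul (HW.add (Hu.mul Huxx))).sub
      ((Hη.mul Hu).mul
        ((((Hu.pow 2).add ((Hη.pow 2).mul (Hux.pow 2))).add (Hη.const_mul 2)).sub_const 2))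
  have hpt : Spt (Seden η u) x t = _ := ht'.deriv
  rw [hpt]
  convert hf' using 1
  rw [e1, e2]
  simp only [Pi.add_apply, Pi.mul_apply, Pi.sub_apply, Pi.pow_apply]
  field_simp
  ring
lemma Sflux_per (η u : ℝ → ℝ → ℝ)
    (hper_η : ∀ t x, η (x + 1) t = η x t) (hper_u : ∀ t x, u (x + 1) t = u x t) :
    ∀ t x, Sflux η u (x + 1) t = Sflux η u x t := by
  intro t x
  simp only [Sflux]
  rw [hper_η, hper_u, per_Spx u hper_u, per_Spx (Spx u) (per_Spx u hper_u),
    per_Spt (Spx u) (per_Spx u hper_u)]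

theorem stmt_13 (T c₀ : ℝ) (hT : 0 < T) (hc₀ : 0 < c₀)
    (η u : ℝ → ℝ → ℝ)
    (hηs : ContDiff ℝ (⊤ : ℕ∞) (fun p : ℝ × ℝ => η p.1 p.2))
    (hus : ContDiff ℝ (⊤ : ℕ∞) (fun p : ℝ × ℝ => u p.1 p.2))
    (hper_η : ∀ t x, η (x + 1) t = η x t)
    (hper_u : ∀ t x, u (x + 1) t = u x t)
    (hpos : ∀ x t, t ∈ Set.Icc 0 T → c₀ ≤ η x t)
    (hpde1 : ∀ x t, t ∈ Set.Icc 0 T →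
      deriv (fun s => η x s) t + deriv (fun y => η y t * u y t) x = 0)
    (hpde2 : ∀ x t, t ∈ Set.Icc 0 T →
      deriv (fun s => u x s) t + deriv (fun y => η y t) x
        + u x t * deriv (fun y => u y t) x
        - (1 / (3 * η x t)) *
          deriv (fun y => (η y t)^3 *
            (deriv (fun s => deriv (fun z => u z s) y) t
              + u y t * deriv (fun z => deriv (fun w => u w t) z) y
              - (deriv (fun z => u z t) y)^2)) x = 0) :
    ∀ t₁ ∈ Set.Icc (0:ℝ) T, ∀ t₂ ∈ Set.Icc (0:ℝ) T,
      (1/2) * ∫ x in (0:ℝ)..1,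
          (η x t₁ * (u x t₁)^2 + (1/3) * (η x t₁)^3 * (deriv (fun y => u y t₁) x)^2
            + (η x t₁ - 1)^2)
      = (1/2) * ∫ x in (0:ℝ)..1,
          (η x t₂ * (u x t₂)^2 + (1/3) * (η x t₂)^3 * (deriv (fun y => u y t₂) x)^2
            + (η x t₂ - 1)^2) := by
  have hed := Seden_smooth η u hηs hus
  have hedt := contDiff_Spt _ hed
  have key := Serre_key T c₀ hc₀ η u hηs hus hpos hpde1 hpde2
  -- the time derivative of the energy integrand integrates to zero
  have hIzero : ∀ t ∈ Set.Icc (0:ℝ) T, (∫ x in (0:ℝ)..1, Spt (Seden η u) x t) = 0 := by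
    intro t ht
    have hint : IntervalIntegrable (fun x => Spt (Seden η u) x t) MeasureTheory.volume 0 1 :=
      ((hedt.continuous).comp (continuous_id.prodMk continuous_const)).intervalIntegrable 0 1
    have := intervalIntegral.integral_eq_sub_of_hasDerivAt
      (f := fun y => Sflux η u y t) (fun x _ => key t ht x) hint
    rw [this]
    have hp := Sflux_per η u hper_η hper_u t 0
    rw [zero_add] at hp
    show Sflux η u 1 t - Sflux η u 0 t = 0
    rw [hp, sub_self]
  -- derivative of the energy under the integral sign
  have hE : ∀ t₀ : ℝ, HasDerivAt (fun s => ∫ x in (0:ℝ)..1, Seden η u x s)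
      (∫ x in (0:ℝ)..1, Spt (Seden η u) x t₀) t₀ := by
    intro t₀
    obtain ⟨C, hC⟩ := (isCompact_Icc.prod isCompact_Icc :
        IsCompact (Set.Icc (0:ℝ) 1 ×ˢ Set.Icc (t₀ - 1) (t₀ + 1))).exists_bound_of_continuousOn
      (hedt.continuous.continuousOn)
    refine (intervalIntegral.hasDerivAt_integral_of_dominated_loc_of_deriv_le
      (F := fun s x => Seden η u x s) (F' := fun s x => Spt (Seden η u) x s)
      (bound := fun _ => C) (ball_mem_nhds t₀ one_pos) ?_ ?_ ?_ ?_ ?_ ?_).2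
    · exact Eventually.of_forall fun s =>
        ((hed.continuous.comp (continuous_id.prodMk continuous_const)).aestronglyMeasurable)
    · exact ((hed.continuous.comp (continuous_id.prodMk continuous_const)).intervalIntegrable 0 1)
    · exact ((hedt.continuous.comp (continuous_id.prodMk continuous_const)).aestronglyMeasurable)
    · refine Eventually.of_forall fun x hx s hs => hC (x, s) ⟨?_, ?_⟩
      · rw [Set.uIoc_of_le (by norm_num : (0:ℝ) ≤ 1)] at hx
        exact ⟨le_of_lt hx.1, hx.2⟩
      · rw [mem_ball, Real.dist_eq] at hs
        have := abs_lt.1 hs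
        exact ⟨by linarith [this.1], by linarith [this.2]⟩
    · exact intervalIntegrable_const
    · exact Eventually.of_forall fun x _ s _ => hasDerivAt_Spt (Seden η u) hed x s
  -- the energy is constant on [0, T]
  have hconst : ∀ t ∈ Set.Icc (0:ℝ) T,
      (∫ x in (0:ℝ)..1, Seden η u x t) = ∫ x in (0:ℝ)..1, Seden η u x 0 := by
    refine constant_of_has_deriv_right_zero
      (f := fun s => ∫ x in (0:ℝ)..1, Seden η u x s) ?_ ?_
    · exact fun s _ => (hE s).continuousAt.continuousWithinAt
    · intro s hs
      have h := hE s
      rw [hIzero s ⟨hs.1, le_of_lt hs.2⟩] at h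
      exact h.hasDerivWithinAt
  intro t₁ ht₁ t₂ ht₂
  have h := (hconst t₁ ht₁).trans (hconst t₂ ht₂).symm
  exact congrArg (fun r => (1/2 : ℝ) * r) h
end
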